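/- Let 𝓛 be a nonempty finite convex subset of a Coxeter group W with root system Φ. For any subset R ⊆ R(𝓛), the stratum Str(R) = {u ∈ W : Sep(u) = R} satisfies |Str(R)| ≤ 2^{|Φ \ (R(𝓛) ∪ (−R(𝓛)))|}. -/

import Mathlib

open scoped Classical

noncomputable section

namespace BKBilliards

variable {I : Type*} [Fintype I] [DecidableEq I]
variable {M : CoxeterMatrix I} {W : Type*} [Group W]

/-- The simple root indexed by `i`, i.e. the `i`-th standard basis vector of `ℝ^I`. -/
def sroot (i : I) : I → ℝ := Pi.single i 1

/-- The data `(ρ, B)` constitutes the standard geometric representation of the Coxeter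
system `cs`, together with its induced symmetric bilinear form (with `μ = 1` on all
pairs whose Coxeter matrix entry is `∞`, encoded as `0`). -/
structure IsGeometric (cs : CoxeterSystem M W) (ρ : Representation ℝ W (I → ℝ))
    (B : LinearMap.BilinForm ℝ (I → ℝ)) : Prop where
  /-- `B(αᵢ, αᵢ') = -cos (π / m i i')` when `m i i' ≠ ∞`. -/
  form_apply_of_ne_zero : ∀ i i' : I, M i i' ≠ 0 →
    B (sroot i) (sroot i') = - Real.cos (Real.pi / (M i i' : ℝ))
  /-- `B(αᵢ, αᵢ') = -1` when `m i i' = ∞` (encoded as `0`). -/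
  form_apply_of_eq_zero : ∀ i i' : I, M i i' = 0 → B (sroot i) (sroot i') = -1
  /-- Each simple reflection acts by the reflection formula. -/
  simple_apply : ∀ (i : I) (v : I → ℝ), ρ (cs.simple i) v = v - (2 * B v (sroot i)) • sroot i

variable (ρ : Representation ℝ W (I → ℝ))

/-- The root system `Φ = {w αᵢ : w ∈ W, i ∈ I}`. -/
def Phi : Set (I → ℝ) := {v | ∃ (w : W) (i : I), v = ρ w (sroot i)}

/-- The half-space `H_β⁺ = {w ∈ W : w β ∈ Φ⁺}`: for a root `β`, membership amounts to
`w β` being a nonnegative combination of the simple roots. -/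
def Hplus (β : I → ℝ) : Set W := {w : W | 0 ≤ ρ w β}

/-- `R(𝓛) = {β ∈ Φ : 𝓛 ⊆ H_β⁺}`. -/
def RL (L : Set W) : Set (I → ℝ) := {β | β ∈ Phi ρ ∧ ∀ w ∈ L, w ∈ Hplus ρ β}

/-- `𝓛` is convex if it equals the intersection of all half-spaces containing it. -/
def IsConvex (L : Set W) : Prop := ∀ u : W, (∀ β ∈ RL ρ L, u ∈ Hplus ρ β) → u ∈ L

/-- The set of separators of `u`: `Sep(u) = {β ∈ R(𝓛) : u β ∈ Φ⁻}`. -/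
def Sep (L : Set W) (u : W) : Set (I → ℝ) := {β | β ∈ RL ρ L ∧ ρ u β ≤ 0}

variable (cs : CoxeterSystem M W)

/-- The noninvertible Bender–Knuth toggle `τᵢ` associated to the convex set `𝓛`. -/
def toggle (L : Set W) (i : I) (u : W) : W :=
  if ρ u⁻¹ (sroot i) ∈ RL ρ L then u else cs.simple i * u

/-- For a word `𝗐 = i_M ⋯ i_1` (a list whose head is `i_M`), the composition
`τ_𝗐 = τ_{i_M} ⋯ τ_{i_1}`. -/
def toggleWord (L : Set W) (l : List I) (u : W) : W :=
  l.foldr (fun i v => toggle ρ cs L i v) u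

/-- `β` dominates `β'` if `H_β⁺ ⊇ H_{β'}⁺`. -/
def Dominates (β β' : I → ℝ) : Prop := Hplus ρ β' ⊆ Hplus ρ β

/-- A small root: a positive root dominating no positive root other than itself. -/
def IsSmall (β : I → ℝ) : Prop :=
  β ∈ Phi ρ ∧ 0 ≤ β ∧ ∀ β', β' ∈ Phi ρ → 0 ≤ β' → Dominates ρ β β' → β' = β

/-- `β` is a transmitting root of the stratum `Str(R)`:
`β ∈ R(𝓛)` and `β = -w⁻¹ αᵢ` for some `w` with `Sep(w) = R` and some `i ∈ I`. -/
def IsTransmitting (L : Set W) (R : Set (I → ℝ)) (β : I → ℝ) : Prop :=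
  β ∈ RL ρ L ∧ ∃ (w : W) (i : I), Sep ρ L w = R ∧ β = - ρ w⁻¹ (sroot i)

end BKBilliards

open BKBilliards

set_option linter.unusedSectionVars false

namespace BKAux

open BKBilliards CoxeterSystem

variable {I : Type*} [Fintype I] [DecidableEq I]
variable {M : CoxeterMatrix I} {W : Type*} [Group W]
variable {cs : CoxeterSystem M W} {ρ : Representation ℝ W (I → ℝ)}
variable {B : LinearMap.BilinForm ℝ (I → ℝ)}

lemma sroot_nonneg (i : I) : (0 : I → ℝ) ≤ sroot i := by
  intro k
  by_cases h : k = i <;> simp [sroot, Pi.single_apply, h]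

lemma not_sroot_le_zero (i : I) : ¬ sroot i ≤ (0 : I → ℝ) := by
  intro h
  have := h i
  simp [sroot] at this
  linarith

lemma B_diag (hgeom : IsGeometric cs ρ B) (i : I) : B (sroot i) (sroot i) = 1 := by
  have h1 : M i i = 1 := M.diagonal i
  have := hgeom.form_apply_of_ne_zero i i (by rw [h1]; exact one_ne_zero)
  rw [this, h1]
  norm_num

lemma B_basis_symm (hgeom : IsGeometric cs ρ B) (i j : I) :
    B (sroot i) (sroot j) = B (sroot j) (sroot i) := by
  by_cases h : M i j = 0
  · rw [hgeom.form_apply_of_eq_zero i j h,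
      hgeom.form_apply_of_eq_zero j i (by rw [M.symmetric j i]; exact h)]
  · rw [hgeom.form_apply_of_ne_zero i j h,
      hgeom.form_apply_of_ne_zero j i (by rw [M.symmetric j i]; exact h), M.symmetric i j]

lemma repr_sum (v : I → ℝ) : ∑ k, v k • sroot k = v := by
  funext l
  simp [sroot, Finset.sum_apply, Pi.single_apply]

lemma B_symm (hgeom : IsGeometric cs ρ B) (v w : I → ℝ) : B v w = B w v := by
  rw [← repr_sum v, ← repr_sum w]
  simp only [map_sum, map_smul, LinearMap.sum_apply, LinearMap.smul_apply, LinearMap.coe_sum,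
    Finset.sum_apply, smul_eq_mul]
  simp_rw [Finset.mul_sum]
  rw [Finset.sum_comm]
  refine Finset.sum_congr rfl fun k _ => Finset.sum_congr rfl fun l _ => ?_
  rw [B_basis_symm hgeom]
  ring

lemma simple_invariant (hgeom : IsGeometric cs ρ B) (i : I) (v w : I → ℝ) :
    B (ρ (cs.simple i) v) (ρ (cs.simple i) w) = B v w := by
  rw [hgeom.simple_apply, hgeom.simple_apply]
  have hd := B_diag hgeom i
  have h1 : B (sroot i) w = B w (sroot i) := B_symm hgeom _ _
  simp only [map_sub, map_smul, LinearMap.sub_apply, LinearMap.smul_apply, smul_eq_mul]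
  rw [hd, h1]
  ring

lemma rho_invariant (hgeom : IsGeometric cs ρ B) (g : W) (v w : I → ℝ) :
    B (ρ g v) (ρ g w) = B v w := by
  refine cs.simple_induction (p := fun g => ∀ v w : I → ℝ, B (ρ g v) (ρ g w) = B v w) g
    (fun i v w => simple_invariant hgeom i v w) (fun v w => by simp) ?_ v w
  intro x y hx hy v w
  rw [map_mul]
  simp only [Module.End.mul_apply]
  rw [hx, hy]

lemma root_B_self (hgeom : IsGeometric cs ρ B) {β : I → ℝ} (hβ : β ∈ Phi ρ) : B β β = 1 := by
  obtain ⟨w, i, rfl⟩ := hβ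
  rw [rho_invariant hgeom, B_diag hgeom]

lemma simple_apply_sroot_self (hgeom : IsGeometric cs ρ B) (i : I) :
    ρ (cs.simple i) (sroot i) = - sroot i := by
  rw [hgeom.simple_apply, B_diag hgeom]
  module

lemma B_comb (a b : ℝ) (i j l : I) :
    B (a • sroot i + b • sroot j) (sroot l)
      = a * B (sroot i) (sroot l) + b * B (sroot j) (sroot l) := by
  simp [map_add, map_smul]

lemma simple_apply_comb_right (hgeom : IsGeometric cs ρ B) {i j : I} {c : ℝ}
    (hc : B (sroot i) (sroot j) = c) (a b : ℝ) :
    ρ (cs.simple j) (a • sroot i + b • sroot j)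
      = a • sroot i + (-(2*c*a) - b) • sroot j := by
  rw [hgeom.simple_apply, B_comb, hc, B_diag hgeom]
  module

lemma simple_apply_comb_left (hgeom : IsGeometric cs ρ B) {i j : I} {c : ℝ}
    (hc : B (sroot i) (sroot j) = c) (a b : ℝ) :
    ρ (cs.simple i) (a • sroot i + b • sroot j)
      = (-(2*c*b) - a) • sroot i + b • sroot j := by
  have h2 : B (sroot j) (sroot i) = c := by rw [B_basis_symm hgeom j i, hc]
  rw [hgeom.simple_apply, B_comb, h2, B_diag hgeom]
  module

lemma alt_word_prod_succ (cs : CoxeterSystem M W) (i j : I) (k : ℕ) :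
    cs.wordProd (alternatingWord i j (k+1))
      = cs.simple (if Even k then j else i) * cs.wordProd (alternatingWord i j k) := by
  rw [alternatingWord_succ', cs.wordProd_cons]

lemma alt_apply_finite (hgeom : IsGeometric cs ρ B) {i j : I} (hij : i ≠ j) (hM : M i j ≠ 0)
    (k : ℕ) :
    ρ (cs.wordProd (alternatingWord i j k)) (sroot i) =
      if Even k then
        (Real.sin (((k:ℝ)+1) * (Real.pi / (M i j : ℝ))) / Real.sin (Real.pi / (M i j : ℝ))) • sroot i
          + (Real.sin ((k:ℝ) * (Real.pi / (M i j : ℝ))) / Real.sin (Real.pi / (M i j : ℝ))) • sroot j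
      else
        (Real.sin ((k:ℝ) * (Real.pi / (M i j : ℝ))) / Real.sin (Real.pi / (M i j : ℝ))) • sroot i
          + (Real.sin (((k:ℝ)+1) * (Real.pi / (M i j : ℝ))) / Real.sin (Real.pi / (M i j : ℝ))) • sroot j := by
  have hm2 : 2 ≤ M i j := by
    have := M.off_diagonal i j hij
    omega
  set θ := Real.pi / (M i j : ℝ) with hθ
  have hmpos : 0 < (M i j : ℝ) := by exact_mod_cast Nat.pos_of_ne_zero hM
  have hθpos : 0 < θ := div_pos Real.pi_pos hmpos
  have hθlt : θ < Real.pi := by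
    rw [hθ, div_lt_iff₀ hmpos]
    have h2 : (2:ℝ) ≤ (M i j : ℝ) := by exact_mod_cast hm2
    nlinarith [Real.pi_pos]
  have hsin : 0 < Real.sin θ := Real.sin_pos_of_pos_of_lt_pi hθpos hθlt
  have hsne : Real.sin θ ≠ 0 := ne_of_gt hsin
  have hc : B (sroot i) (sroot j) = - Real.cos θ := hgeom.form_apply_of_ne_zero i j hM
  have key : ∀ x : ℝ, 2 * Real.cos θ * Real.sin ((x+1) * θ) - Real.sin (x * θ)
      = Real.sin ((x+1+1) * θ) := by
    intro x
    rw [show (x+1+1)*θ = (x+1)*θ + θ by ring, show x*θ = (x+1)*θ - θ by ring,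
      Real.sin_add, Real.sin_sub]
    ring
  induction k with
  | zero =>
    rw [if_pos Even.zero,
      show alternatingWord i j 0 = ([] : List I) from rfl, cs.wordProd_nil, map_one]
    simp [div_self hsne]
  | succ k ih =>
    by_cases hk : Even k
    · have hodd : ¬ Even (k+1) := by rw [Nat.even_add_one]; exact not_not_intro hk
      rw [alt_word_prod_succ, if_pos hk, map_mul, Module.End.mul_apply, ih, if_pos hk,
        simple_apply_comb_right hgeom hc, if_neg hodd]
      push_cast
      congr 1
      congr 1
      rw [← key (k:ℝ)]
      field_simp
      try ring
    · have heven : Even (k+1) := Nat.even_add_one.mpr hk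
      rw [alt_word_prod_succ, if_neg hk, map_mul, Module.End.mul_apply, ih, if_neg hk,
        simple_apply_comb_left hgeom hc, if_pos heven]
      push_cast
      congr 1
      congr 1
      rw [← key (k:ℝ)]
      field_simp
      try ring

lemma alt_apply_infinite (hgeom : IsGeometric cs ρ B) {i j : I} (hM : M i j = 0) (k : ℕ) :
    ∃ a b : ℝ, 0 ≤ a ∧ 0 ≤ b ∧
      ρ (cs.wordProd (alternatingWord i j k)) (sroot i) = a • sroot i + b • sroot j := by
  have hc : B (sroot i) (sroot j) = -1 := hgeom.form_apply_of_eq_zero i j hM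
  suffices h : ∃ a b : ℝ, 0 ≤ a ∧ 0 ≤ b ∧
      (if Even k then b ≤ a ∧ 1 ≤ a else a ≤ b ∧ 1 ≤ b) ∧
      ρ (cs.wordProd (alternatingWord i j k)) (sroot i) = a • sroot i + b • sroot j by
    obtain ⟨a, b, ha, hb, _, hf⟩ := h
    exact ⟨a, b, ha, hb, hf⟩
  induction k with
  | zero =>
    refine ⟨1, 0, zero_le_one, le_refl 0, ?_, ?_⟩
    · rw [if_pos Even.zero]; constructor <;> norm_num
    · rw [show alternatingWord i j 0 = ([] : List I) from rfl, cs.wordProd_nil, map_one]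
      simp
  | succ k ih =>
    obtain ⟨a, b, ha, hb, hinv, hf⟩ := ih
    by_cases hk : Even k
    · rw [if_pos hk] at hinv
      obtain ⟨hba, h1a⟩ := hinv
      have hodd : ¬ Even (k+1) := by rw [Nat.even_add_one]; exact not_not_intro hk
      refine ⟨a, 2*a - b, ha, by linarith, ?_, ?_⟩
      · rw [if_neg hodd]
        constructor <;> linarith
      · rw [alt_word_prod_succ, if_pos hk, map_mul, Module.End.mul_apply, hf,
          simple_apply_comb_right hgeom hc]
        congr 2
        ring
    · rw [if_neg hk] at hinv
      obtain ⟨hab, h1b⟩ := hinv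
      refine ⟨2*b - a, b, by linarith, hb, ?_, ?_⟩
      · rw [if_pos (Nat.even_add_one.mpr hk)]
        constructor <;> linarith
      · rw [alt_word_prod_succ, if_neg hk, map_mul, Module.End.mul_apply, hf,
          simple_apply_comb_left hgeom hc]
        congr 2
        ring

lemma alt_apply_nonneg (hgeom : IsGeometric cs ρ B) {i j : I} (hij : i ≠ j) {k : ℕ}
    (hk : M i j = 0 ∨ k < M i j) :
    ∃ a b : ℝ, 0 ≤ a ∧ 0 ≤ b ∧
      ρ (cs.wordProd (alternatingWord i j k)) (sroot i) = a • sroot i + b • sroot j := by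
  rcases hk with h0 | hlt
  · exact alt_apply_infinite hgeom h0 k
  · have hM : M i j ≠ 0 := by omega
    have hm2 : 2 ≤ M i j := by have := M.off_diagonal i j hij; omega
    set θ := Real.pi / (M i j : ℝ) with hθ
    have hmpos : 0 < (M i j : ℝ) := by exact_mod_cast Nat.pos_of_ne_zero hM
    have hθpos : 0 < θ := div_pos Real.pi_pos hmpos
    have hθlt : θ < Real.pi := by
      rw [hθ, div_lt_iff₀ hmpos]
      have h2 : (2:ℝ) ≤ (M i j : ℝ) := by exact_mod_cast hm2
      nlinarith [Real.pi_pos]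
    have hsin : 0 < Real.sin θ := Real.sin_pos_of_pos_of_lt_pi hθpos hθlt
    have hk1 : ((k:ℝ)+1) * θ ≤ Real.pi := by
      have hle : ((k:ℝ)+1) ≤ (M i j : ℝ) := by exact_mod_cast hlt
      calc ((k:ℝ)+1) * θ ≤ (M i j : ℝ) * θ := by nlinarith
        _ = Real.pi := by rw [hθ]; field_simp
    have hk0 : (k:ℝ) * θ ≤ Real.pi := by nlinarith
    have hs1 : 0 ≤ Real.sin (((k:ℝ)+1) * θ) :=
      Real.sin_nonneg_of_nonneg_of_le_pi (by positivity) hk1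
    have hs0 : 0 ≤ Real.sin ((k:ℝ) * θ) :=
      Real.sin_nonneg_of_nonneg_of_le_pi (by positivity) hk0
    have hf := alt_apply_finite hgeom hij hM k
    by_cases hk : Even k
    · rw [if_pos hk] at hf
      exact ⟨_, _, div_nonneg hs1 hsin.le, div_nonneg hs0 hsin.le, hf⟩
    · rw [if_neg hk] at hf
      exact ⟨_, _, div_nonneg hs0 hsin.le, div_nonneg hs1 hsin.le, hf⟩

lemma greedy (cs : CoxeterSystem M W) : ∀ n : ℕ, ∀ w : W, ∀ i j : I, cs.length w = n → i ≠ j →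
    cs.IsRightDescent w j → ¬ cs.IsRightDescent w i →
    ∃ (u : W) (k : ℕ), 1 ≤ k ∧ w = u * cs.wordProd (alternatingWord i j k) ∧
      cs.length w = cs.length u + k ∧ ¬ cs.IsRightDescent u i ∧ ¬ cs.IsRightDescent u j := by
  intro n
  induction n using Nat.strong_induction_on with
  | _ n ih =>
    intro w i j hn hij hdj hdi
    have hlen : cs.length (w * cs.simple j) + 1 = cs.length w := cs.isRightDescent_iff.mp hdj
    have hndj : ¬ cs.IsRightDescent (w * cs.simple j) j :=
      cs.isRightDescent_iff_not_isRightDescent_mul.mp hdj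
    by_cases hdi' : cs.IsRightDescent (w * cs.simple j) i
    · obtain ⟨u, k, hk1, hweq, hlen', huj, hui⟩ :=
        ih (cs.length (w * cs.simple j)) (by omega) (w * cs.simple j) j i rfl (Ne.symm hij)
          hdi' hndj
      refine ⟨u, k+1, by omega, ?_, by omega, hui, huj⟩
      rw [show alternatingWord i j (k+1) = (alternatingWord j i k).concat j from rfl,
        cs.wordProd_concat, ← mul_assoc, ← hweq, cs.simple_mul_simple_cancel_right]
    · refine ⟨w * cs.simple j, 1, le_refl 1, ?_, by omega, hdi', hndj⟩
      rw [show alternatingWord i j 1 = [j] from rfl, cs.wordProd_singleton,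
        cs.simple_mul_simple_cancel_right]

lemma pos_of_not_descent (hgeom : IsGeometric cs ρ B) :
    ∀ n : ℕ, ∀ w : W, ∀ i : I, cs.length w = n → ¬ cs.IsRightDescent w i →
      0 ≤ ρ w (sroot i) := by
  intro n
  induction n using Nat.strong_induction_on with
  | _ n ih =>
    intro w i hn hdi
    rcases eq_or_ne w 1 with rfl | hw
    · rw [map_one]
      exact sroot_nonneg i
    · obtain ⟨j, hdj⟩ := cs.exists_rightDescent_of_ne_one hw
      have hij : i ≠ j := by rintro rfl; exact hdi hdj
      obtain ⟨u, k, hk1, hweq, hlen, hui, huj⟩ :=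
        greedy cs (cs.length w) w i j rfl hij hdj hdi
      have hkbound : M i j = 0 ∨ k < M i j := by
        by_cases h0 : M i j = 0
        · exact Or.inl h0
        · right
          by_contra hge
          push_neg at hge
          have hws : w * cs.simple i
              = u * cs.wordProd (alternatingWord j i (k+1)) := by
            rw [show alternatingWord j i (k+1) = (alternatingWord i j k).concat i from rfl,
              cs.wordProd_concat, ← mul_assoc, ← hweq]
          have hlws : cs.length (w * cs.simple i) = cs.length w + 1 :=
            cs.not_isRightDescent_iff.mp hdi
          have hle : cs.length w + 1
              ≤ cs.length u + cs.length (cs.wordProd (alternatingWord j i (k+1))) := by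
            rw [← hlws, hws]
            exact cs.length_mul_le _ _
          have hle2 : cs.length (cs.wordProd (alternatingWord j i (k+1))) ≤ k+1 := by
            refine le_trans (cs.length_wordProd_le _) ?_
            rw [CoxeterSystem.length_alternatingWord]
          have hred : cs.IsReduced (alternatingWord j i (k+1)) := by
            show cs.length (cs.wordProd (alternatingWord j i (k+1))) = _
            rw [CoxeterSystem.length_alternatingWord]
            omega
          have hMji : M j i ≠ 0 := by rw [M.symmetric j i]; exact h0
          have hgt : k + 1 > M j i := by rw [M.symmetric j i]; omega
          exact cs.not_isReduced_alternatingWord j i hMji hgt hred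
      obtain ⟨a, b, ha, hb, hab⟩ := alt_apply_nonneg hgeom hij hkbound
      have hu_i : 0 ≤ ρ u (sroot i) := ih (cs.length u) (by omega) u i rfl hui
      have hu_j : 0 ≤ ρ u (sroot j) := ih (cs.length u) (by omega) u j rfl huj
      rw [hweq, map_mul, Module.End.mul_apply, hab, map_add, map_smul, map_smul]
      intro l
      have h1 := hu_i l
      have h2 := hu_j l
      simp only [Pi.add_apply, Pi.smul_apply, smul_eq_mul, Pi.zero_apply] at *
      nlinarith

lemma nonpos_of_descent (hgeom : IsGeometric cs ρ B) {w : W} {i : I}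
    (hd : cs.IsRightDescent w i) : ρ w (sroot i) ≤ 0 := by
  have h1 : ¬ cs.IsRightDescent (w * cs.simple i) i :=
    cs.isRightDescent_iff_not_isRightDescent_mul.mp hd
  have h2 : 0 ≤ ρ (w * cs.simple i) (sroot i) :=
    pos_of_not_descent hgeom _ _ i rfl h1
  have h3 : ρ w (sroot i) = - ρ (w * cs.simple i) (sroot i) := by
    conv_lhs => rw [show w = (w * cs.simple i) * cs.simple i from
      (cs.simple_mul_simple_cancel_right i).symm]
    rw [map_mul, Module.End.mul_apply, simple_apply_sroot_self hgeom, map_neg]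
  rw [h3]
  exact neg_nonpos.mpr h2

end BKAux

universe u v

/-- If `𝓛` is finite, then every stratum `Str(R) = {u : Sep(u) = R}`
satisfies `|Str(R)| ≤ 2 ^ |Φ \ (R(𝓛) ∪ (-R(𝓛)))|`. -/
theorem stratum_card_le
    {I : Type u} [Fintype I] [DecidableEq I] {M : CoxeterMatrix I} {W : Type v} [Group W]
    (cs : CoxeterSystem M W) (ρ : Representation ℝ W (I → ℝ))
    (B : LinearMap.BilinForm ℝ (I → ℝ)) (hgeom : IsGeometric cs ρ B)
    (L : Set W) (hL : L.Nonempty) (hconv : IsConvex ρ L) (hLfin : L.Finite)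
    (R : Set (I → ℝ)) (hR : R ⊆ RL ρ L) :
    Cardinal.lift.{u} (Cardinal.mk {u : W | Sep ρ L u = R}) ≤
      Cardinal.lift.{v} (2 ^ Cardinal.mk ↥(Phi ρ \ (RL ρ L ∪ (-(RL ρ L))))) := by
  classical
  have key : Function.Injective
      (fun (x : {u : W | Sep ρ L u = R}) =>
        ({β : ↥(Phi ρ \ (RL ρ L ∪ (-(RL ρ L)))) | ρ x.1 β.1 ≤ 0} :
          Set ↥(Phi ρ \ (RL ρ L ∪ (-(RL ρ L)))))) := by
    rintro ⟨u, hu⟩ ⟨v, hv⟩ hf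
    simp only [Set.mem_setOf_eq] at hu hv hf
    apply Subtype.ext
    show u = v
    by_contra hne
    have hg : u * v⁻¹ ≠ 1 := fun h => hne (by
      have := congrArg (· * v) h
      simpa [mul_assoc] using this)
    obtain ⟨i, hi⟩ := cs.exists_rightDescent_of_ne_one hg
    set β := ρ v⁻¹ (sroot i) with hβ
    have hβPhi : β ∈ Phi ρ := ⟨v⁻¹, i, rfl⟩
    have huβ : ρ u β ≤ 0 := by
      have h := BKAux.nonpos_of_descent hgeom hi
      rw [map_mul, Module.End.mul_apply] at h
      exact h
    have hvβ : ρ v β = sroot i := by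
      rw [hβ, ← Module.End.mul_apply, ← map_mul, mul_inv_cancel, map_one, Module.End.one_apply]
    by_cases hRL : β ∈ RL ρ L
    · have hmem : β ∈ Sep ρ L u := ⟨hRL, huβ⟩
      rw [hu, ← hv] at hmem
      exact BKAux.not_sroot_le_zero i (hvβ ▸ hmem.2)
    · by_cases hnRL : β ∈ -(RL ρ L)
      · have hmRL : -β ∈ RL ρ L := Set.mem_neg.mp hnRL
        have hmem : -β ∈ Sep ρ L v :=
          ⟨hmRL, by rw [map_neg, hvβ]; exact neg_nonpos.mpr (BKAux.sroot_nonneg i)⟩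
        rw [hv, ← hu] at hmem
        have h4 : 0 ≤ ρ u β := by
          have h := hmem.2
          rw [map_neg] at h
          exact neg_nonpos.mp h
        have h5 : ρ u β = 0 := le_antisymm huβ h4
        have h6 : B β β = 1 := BKAux.root_B_self hgeom hβPhi
        rw [← BKAux.rho_invariant hgeom u β β, h5] at h6
        simp at h6
      · have hβD : β ∈ Phi ρ \ (RL ρ L ∪ (-(RL ρ L))) := ⟨hβPhi, by
          intro hmem
          rcases hmem with h | h
          exacts [hRL h, hnRL h]⟩
        have h7 := Set.ext_iff.mp hf ⟨β, hβD⟩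
        simp only [Set.mem_setOf_eq] at h7
        rw [hvβ] at h7
        exact BKAux.not_sroot_le_zero i (h7.mp huβ)
  refine le_trans (Cardinal.lift_mk_le'.mpr ⟨⟨_, key⟩⟩) (le_of_eq ?_)
  rw [Cardinal.mk_set]
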